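/- Let J ∈ B(H) be an anti self-adjoint unitary operator on H = ℓ²(ℕ, ℍ) and m ∈ 𝕊. If {e_r : r ∈ ℕ} is an orthonormal basis of the slice Hilbert space H_+^{Jm} (over the field ℂ_m), then {e_r : r ∈ ℕ} is an orthonormal basis of the quaternionic Hilbert space H, i.e., ⟨e_r, e_s⟩ = δ_{rs} and every x ∈ H satisfies x = ∑_r e_r⟨e_r, x⟩. -/

import Mathlib

noncomputable section

open Quaternion Filter Topology

/-- The division ring `ℍ` of real quaternions. -/
abbrev Hq := Quaternion ℝ

/-- The quaternionic Hilbert space `H = ℓ²(ℕ, ℍ)`. -/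
abbrev Hsp := lp (fun _ : ℕ => Hq) 2

/-- Right scalar multiplication `x ↦ x · q` on `ℓ²(ℕ, ℍ)` (coordinatewise right
multiplication by the quaternion `q`). -/
def rsmul (q : Hq) (x : Hsp) : Hsp := MulOpposite.op q • x

/-- The quaternionic inner product `⟨x, y⟩ = ∑ₙ x̄ₙ yₙ`. -/
def qinner (x y : Hsp) : Hq := ∑' n, star (x n) * y n

/-- The set `𝕊` of unit imaginary quaternions. -/
def QS : Set Hq := {q | star q = -q ∧ ‖q‖ = 1}

/-- The slice complex plane `ℂ_m = {α + mβ : α, β ∈ ℝ}`. -/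
def sliceC (m : Hq) : Set Hq := {q | ∃ α β : ℝ, q = (α : Hq) + m * (β : Hq)}

/-- The closed upper half slice plane `ℂ_m⁺ = {α + mβ : α ∈ ℝ, β ≥ 0}`. -/
def sliceCplus (m : Hq) : Set Hq :=
  {q | ∃ α β : ℝ, 0 ≤ β ∧ q = (α : Hq) + m * (β : Hq)}

/-- `T : H → H` is a bounded right linear operator, i.e. `T ∈ B(H)`. -/
def IsBoundedRightLinear (T : Hsp → Hsp) : Prop :=
  (∀ x y, T (x + y) = T x + T y) ∧ (∀ q x, T (rsmul q x) = rsmul q (T x)) ∧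
    ∃ M : ℝ, ∀ x, ‖T x‖ ≤ M * ‖x‖

/-- `S` is the adjoint of the (bounded) operator `T`: `⟨y, Tx⟩ = ⟨Sy, x⟩` for all `x, y`. -/
def AdjointOf (T S : Hsp → Hsp) : Prop := ∀ x y, qinner y (T x) = qinner (S y) x

/-- `T` is anti self-adjoint: `T* = -T`. -/
def IsAntiSelfAdjoint (T : Hsp → Hsp) : Prop := AdjointOf T (fun x => -(T x))

/-- `T` is unitary: `T*T = TT* = I`. -/
def IsUnitaryOp (T : Hsp → Hsp) : Prop :=
  ∃ S, AdjointOf T S ∧ (∀ x, S (T x) = x) ∧ (∀ x, T (S x) = x)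

/-- The slice Hilbert space `H₊^{Jm} = {u ∈ H : Ju = um}`. -/
def Hplus (J : Hsp → Hsp) (m : Hq) : Set Hsp := {u | J u = rsmul m u}

/-- `H₋^{Jm} = {u ∈ H : Ju = -um}`. -/
def Hminus (J : Hsp → Hsp) (m : Hq) : Set Hsp := {u | J u = -(rsmul m u)}

/-- `e` is an orthonormal basis of the (closed subspace given by the) set `S`:
each `e r` lies in `S`, the `e r` are orthonormal, and every `x ∈ S` expands as
`x = ∑ᵣ (e r) ⟨e r, x⟩`. Taking `S = Set.univ` gives orthonormal bases of `H`. -/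
def IsONBasisOn (S : Set Hsp) (e : ℕ → Hsp) : Prop :=
  (∀ r, e r ∈ S) ∧ (∀ r s, qinner (e r) (e s) = if r = s then 1 else 0) ∧
    ∀ x ∈ S, HasSum (fun r => rsmul (qinner (e r) x) (e r)) x

/-- A (possibly unbounded) operator in `H`: a domain together with an assignment of
values (only the values on the domain are relevant). -/
structure QOp where
  dom : Set Hsp
  app : Hsp → Hsp

/-- The operator `T` is right linear: its domain is a right `ℍ`-submodule and `T`
is additive and right `ℍ`-homogeneous on it. -/
def QOp.IsRightLinear (T : QOp) : Prop :=
  (0 ∈ T.dom) ∧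
  (∀ x ∈ T.dom, ∀ y ∈ T.dom, x + y ∈ T.dom ∧ T.app (x + y) = T.app x + T.app y) ∧
  (∀ x ∈ T.dom, ∀ q : Hq, rsmul q x ∈ T.dom ∧ T.app (rsmul q x) = rsmul q (T.app x))

/-- `T` is densely defined. -/
def QOp.IsDenselyDefined (T : QOp) : Prop := Dense T.dom

/-- `T` is a closed operator: its graph is closed in `H × H`. -/
def QOp.IsClosedOp (T : QOp) : Prop :=
  IsClosed {p : Hsp × Hsp | p.1 ∈ T.dom ∧ p.2 = T.app p.1}

/-- `S` is the adjoint `T*` of `T`: the domain of `S` is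
`{y : x ↦ ⟨y, Tx⟩ is continuous on D(T)}` and `⟨y, Tx⟩ = ⟨Sy, x⟩` there. -/
def QOp.IsAdjointOf (T S : QOp) : Prop :=
  S.dom = {y | ContinuousOn (fun x => qinner y (T.app x)) T.dom} ∧
  ∀ y ∈ S.dom, ∀ x ∈ T.dom, qinner y (T.app x) = qinner (S.app y) x

/-- Composition `S ∘ T` of partial operators, with the natural domain. -/
def QOp.comp (S T : QOp) : QOp :=
  ⟨{x ∈ T.dom | T.app x ∈ S.dom}, fun x => S.app (T.app x)⟩

/-- Equality of partial operators: equal domains and equal values on the domain. -/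
def QOp.Eq (A B : QOp) : Prop := A.dom = B.dom ∧ ∀ x ∈ A.dom, A.app x = B.app x

/-- `T` is normal: `T*T = TT*` (including equality of the domains). -/
def QOp.IsNormal (T : QOp) : Prop :=
  ∃ S : QOp, T.IsAdjointOf S ∧ QOp.Eq (S.comp T) (T.comp S)

/-- `T` is compact (as an operator on the subspace `S` of `H`): the image of the
closed unit ball of `S` is relatively compact. -/
def IsCompactOn (T : Hsp → Hsp) (S : Set Hsp) : Prop :=
  IsCompact (closure (T '' (Metric.closedBall 0 1 ∩ S)))

/-- `T` has squared Hilbert–Schmidt norm `v` on the subspace `S`: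
`∑ᵣ ‖T eᵣ‖² = v` for some orthonormal basis `e` of `S`. -/
def HasHSNormSqOn (T : Hsp → Hsp) (S : Set Hsp) (v : ℝ) : Prop :=
  ∃ e : ℕ → Hsp, IsONBasisOn S e ∧ HasSum (fun r => ‖T (e r)‖ ^ 2) v

/-- `T` is diagonal: there are an orthonormal basis `{φᵣ}` of `H` contained in `D(T)`
and quaternions `qᵣ` with `Tφᵣ = φᵣ qᵣ`. -/
def QOp.IsDiagonal (T : QOp) : Prop :=
  ∃ e : ℕ → Hsp, IsONBasisOn Set.univ e ∧ (∀ r, e r ∈ T.dom) ∧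
    ∃ q : ℕ → Hq, ∀ r, T.app (e r) = rsmul (q r) (e r)

/-- The operator `Δ_q(N) = N² - N(q + q̄) + I|q|²` for a bounded operator `N`. -/
def sphDeltaB (N : Hsp → Hsp) (q : Hq) : Hsp → Hsp :=
  fun x => N (N x) - rsmul (q + star q) (N x) + rsmul ((normSq q : ℝ) : Hq) x

/-- `q` lies in the spherical resolvent of the bounded operator `N`. -/
def inSphResolventB (N : Hsp → Hsp) (q : Hq) : Prop :=
  (∀ x, sphDeltaB N q x = 0 → x = 0) ∧
  Dense (Set.range (sphDeltaB N q)) ∧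
  ∃ M : ℝ, ∀ x, ‖x‖ ≤ M * ‖sphDeltaB N q x‖

/-- The spherical spectrum of a bounded operator. -/
def sphSpectrumB (N : Hsp → Hsp) : Set Hq := {q | ¬ inSphResolventB N q}

/-- The domain `D(N²)` of the square of a partial operator. -/
def QOp.sqDom (N : QOp) : Set Hsp := {x ∈ N.dom | N.app x ∈ N.dom}

/-- The map underlying `Δ_q(N) = N² - N(q + q̄) + I|q|²`, defined on `D(N²)`. -/
def sphDeltaU (N : QOp) (q : Hq) : Hsp → Hsp :=
  fun x => N.app (N.app x) - rsmul (q + star q) (N.app x) + rsmul ((normSq q : ℝ) : Hq) x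

/-- `q` lies in the spherical resolvent of the operator `N ∈ C(H)`. -/
def inSphResolventU (N : QOp) (q : Hq) : Prop :=
  (∀ x ∈ N.sqDom, sphDeltaU N q x = 0 → x = 0) ∧
  Dense (sphDeltaU N q '' N.sqDom) ∧
  ∃ M : ℝ, ∀ x ∈ N.sqDom, ‖x‖ ≤ M * ‖sphDeltaU N q x‖

/-- The spherical spectrum of `N ∈ C(H)`. -/
def sphSpectrumU (N : QOp) : Set Hq := {q | ¬ inSphResolventU N q}

/-- The circularization `Ω_K = {α + jβ : α + mβ ∈ K, j ∈ 𝕊}` of `K ⊆ ℂ_m`. -/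
def circ (m : Hq) (K : Set Hq) : Set Hq :=
  {p | ∃ α β : ℝ, ∃ j ∈ QS, ((α : Hq) + m * (β : Hq) ∈ K) ∧ p = (α : Hq) + j * (β : Hq)}

/-!
`J² = -1`, since the adjoint of `J` is both `-J` and (by unitarity) its inverse. Hence every
`x ∈ H` splits as `x = x₊ + x₋` with `x₊ = (x - (Jx)m)/2 ∈ H₊^{Jm}` and `x₋ = (x + (Jx)m)/2 ∈ H₋^{Jm}`.
Right multiplication by a nonzero quaternion `n` anticommuting with `m` maps `H₋^{Jm}` into
`H₊^{Jm}`, so `x = x₊ + (x₋ n) n⁻¹` with both `x₊` and `x₋ n` in `H₊^{Jm}`. The expansion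
`y = ∑ᵣ eᵣ⟨eᵣ, y⟩` holds on `H₊^{Jm}` and is compatible with sums and right scalar multiplication,
so it holds for `x`.
-/

lemma rsmul_apply (q : Hq) (x : Hsp) (n : ℕ) : rsmul q x n = x n * q := by
  simp [rsmul, lp.coeFn_smul, MulOpposite.smul_eq_mul_unop]

lemma rsmul_add (q : Hq) (x y : Hsp) : rsmul q (x + y) = rsmul q x + rsmul q y :=
  smul_add _ _ _

lemma rsmul_sub (q : Hq) (x y : Hsp) : rsmul q (x - y) = rsmul q x - rsmul q y :=
  smul_sub _ _ _

lemma rsmul_neg (q : Hq) (x : Hsp) : rsmul q (-x) = -rsmul q x :=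
  smul_neg _ _

lemma add_rsmul (p q : Hq) (x : Hsp) : rsmul (p + q) x = rsmul p x + rsmul q x := by
  simp [rsmul, add_smul]

lemma neg_rsmul (q : Hq) (x : Hsp) : rsmul (-q) x = -rsmul q x := by
  simp [rsmul]

lemma rsmul_one (x : Hsp) : rsmul 1 x = x :=
  one_smul _ x

lemma rsmul_rsmul (p q : Hq) (x : Hsp) : rsmul q (rsmul p x) = rsmul (p * q) x := by
  simp [rsmul, smul_smul]

lemma summable_star_mul (x y : Hsp) : Summable fun n => star (x n) * y n :=
  (lp.summable_mul (p := 2) (q := 2) (by norm_num [Real.HolderConjugate.two_two]) x y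
    ).of_norm_bounded fun n => by rw [norm_mul, norm_star]

lemma qinner_add_right (x y z : Hsp) : qinner x (y + z) = qinner x y + qinner x z := by
  simp only [qinner, lp.coeFn_add, Pi.add_apply, mul_add]
  exact (summable_star_mul x y).tsum_add (summable_star_mul x z)

lemma qinner_sub_left (x y z : Hsp) : qinner (x - y) z = qinner x z - qinner y z := by
  simp only [qinner, lp.coeFn_sub, Pi.sub_apply, star_sub, sub_mul]
  exact (summable_star_mul x z).tsum_sub (summable_star_mul y z)

lemma qinner_rsmul_right (x y : Hsp) (q : Hq) : qinner x (rsmul q y) = qinner x y * q := by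
  simp only [qinner, rsmul_apply, ← mul_assoc]
  exact (summable_star_mul x y).tsum_mul_right q

lemma qinner_self (x : Hsp) : qinner x x = ((‖x‖ ^ 2 : ℝ) : Hq) := by
  rw [← real_inner_self_eq_norm_sq, lp.inner_eq_tsum, ← tsum_coe, qinner]
  congr! 2 with n
  rw [star_mul_self, inner_self]

lemma qinner_self_eq_zero {x : Hsp} : qinner x x = 0 ↔ x = 0 := by
  rw [qinner_self, ← coe_zero, coe_inj, sq_eq_zero_iff, norm_eq_zero]

lemma AdjointOf.unique {T S S' : Hsp → Hsp} (hS : AdjointOf T S) (hS' : AdjointOf T S') :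
    S = S' := by
  funext y
  rw [← sub_eq_zero, ← qinner_self_eq_zero, qinner_sub_left, ← hS, ← hS', sub_self]

lemma IsAntiSelfAdjoint.apply_apply {J : Hsp → Hsp} (ha : IsAntiSelfAdjoint J)
    (hu : IsUnitaryOp J) (x : Hsp) : J (J x) = -x := by
  obtain ⟨S, hS, hSJ, -⟩ := hu
  have hx := hSJ x
  rw [hS.unique ha] at hx
  exact neg_eq_iff_eq_neg.mp hx

lemma Quaternion.mul_eq_neg_mul_of_re_eq_zero {R : Type*} [CommRing R] {m n : ℍ[R]}
    (hm : m.re = 0) (hn : n.re = 0) (h : n.imI * m.imI + n.imJ * m.imJ + n.imK * m.imK = 0) :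
    n * m = -(m * n) := by
  ext
  · simp only [re_mul, re_neg, hm, hn]
    linear_combination -2 * h
  all_goals simp only [imI_mul, imJ_mul, imK_mul, imI_neg, imJ_neg, imK_neg, hm, hn]; ring

/- The witness needs a case split: by the hairy ball theorem no continuous choice of a unit
vector orthogonal to `m` exists on the whole sphere. -/
lemma Quaternion.exists_ne_zero_mul_eq_neg_mul {R : Type*} [CommRing R] [Nontrivial R] {m : ℍ[R]}
    (hm : m.re = 0) : ∃ n : ℍ[R], n ≠ 0 ∧ n * m = -(m * n) := by
  by_cases hJK : m.imJ = 0 ∧ m.imK = 0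
  · obtain ⟨n, hn, hnI, hnJ, hnK⟩ : ∃ n : ℍ[R], n.re = 0 ∧ n.imI = 0 ∧ n.imJ = 1 ∧ n.imK = 0 :=
      ⟨⟨0, 0, 1, 0⟩, rfl, rfl, rfl, rfl⟩
    refine ⟨n, fun h => one_ne_zero (hnJ.symm.trans (congrArg (·.imJ) h)), ?_⟩
    exact mul_eq_neg_mul_of_re_eq_zero hm hn (by simp [hnI, hnJ, hnK, hJK.1])
  · obtain ⟨n, hn, hnI, hnJ, hnK⟩ :
        ∃ n : ℍ[R], n.re = 0 ∧ n.imI = 0 ∧ n.imJ = m.imK ∧ n.imK = -m.imJ :=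
      ⟨⟨0, 0, m.imK, -m.imJ⟩, rfl, rfl, rfl, rfl⟩
    refine ⟨n, fun h => hJK ?_, mul_eq_neg_mul_of_re_eq_zero hm hn (by rw [hnI, hnJ, hnK]; ring)⟩
    rw [h] at hnJ hnK
    exact ⟨by simpa using hnK, by simpa using hnJ.symm⟩

lemma mul_self_eq_neg_one_of_mem_QS {m : Hq} (hm : m ∈ QS) : m * m = -1 := by
  rw [← neg_neg (m * m), ← neg_mul, ← hm.1, star_mul_self, normSq_eq_norm_mul_self, hm.2]
  simp

section Slice

variable {m : Hq}

lemma rsmul_mem_Hplus_of_mem_Hminus {J : Hsp → Hsp} (hJ : ∀ q x, J (rsmul q x) = rsmul q (J x))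
    {n : Hq} (hnm : n * m = -(m * n)) {u : Hsp} (hu : u ∈ Hminus J m) :
    rsmul n u ∈ Hplus J m := by
  change J (rsmul n u) = rsmul m (rsmul n u)
  rw [hJ, hu, rsmul_neg, rsmul_rsmul, rsmul_rsmul, hnm, neg_rsmul]

variable {J : Hsp →+ Hsp}

lemma sub_rsmul_apply_mem_Hplus (hJ : ∀ q x, J (rsmul q x) = rsmul q (J x))
    (hJJ : ∀ x, J (J x) = -x) (hm : m * m = -1) (x : Hsp) :
    x - rsmul m (J x) ∈ Hplus J m := by
  change J (x - rsmul m (J x)) = rsmul m (x - rsmul m (J x))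
  rw [map_sub, hJ, hJJ, rsmul_sub, rsmul_rsmul, hm, neg_rsmul, rsmul_one, rsmul_neg]
  abel

lemma add_rsmul_apply_mem_Hminus (hJ : ∀ q x, J (rsmul q x) = rsmul q (J x))
    (hJJ : ∀ x, J (J x) = -x) (hm : m * m = -1) (x : Hsp) :
    x + rsmul m (J x) ∈ Hminus J m := by
  change J (x + rsmul m (J x)) = -rsmul m (x + rsmul m (J x))
  rw [map_add, hJ, hJJ, rsmul_add, rsmul_rsmul, hm, neg_rsmul, rsmul_one, rsmul_neg]
  abel

lemma exists_eq_add_rsmul_of_mem_Hplus (hJ : ∀ q x, J (rsmul q x) = rsmul q (J x))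
    (hJJ : ∀ x, J (J x) = -x) (hm : m * m = -1)
    {n : Hq} (hn : n ≠ 0) (hnm : n * m = -(m * n)) (x : Hsp) :
    ∃ u ∈ Hplus J m, ∃ v ∈ Hplus J m, x = u + rsmul n⁻¹ v := by
  set y := rsmul ((1 / 2 : ℝ) : Hq) x
  refine ⟨y - rsmul m (J y), sub_rsmul_apply_mem_Hplus hJ hJJ hm y,
    rsmul n (y + rsmul m (J y)),
    rsmul_mem_Hplus_of_mem_Hminus hJ hnm (add_rsmul_apply_mem_Hminus hJ hJJ hm y), ?_⟩
  rw [rsmul_rsmul, mul_inv_cancel₀ hn, rsmul_one, sub_add_add_cancel, ← add_rsmul, ← coe_add,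
    add_halves (1 : ℝ), coe_one, rsmul_one]

end Slice

def HasExpansion (e : ℕ → Hsp) (x : Hsp) : Prop :=
  HasSum (fun r => rsmul (qinner (e r) x) (e r)) x

lemma HasExpansion.add {e : ℕ → Hsp} {a b : Hsp} (ha : HasExpansion e a) (hb : HasExpansion e b) :
    HasExpansion e (a + b) := by
  unfold HasExpansion at *
  simpa only [qinner_add_right, add_rsmul] using ha.add hb

lemma HasExpansion.rsmul {e : ℕ → Hsp} {b : Hsp} (hb : HasExpansion e b) (q : Hq) :
    HasExpansion e (rsmul q b) := by
  unfold HasExpansion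
  simp_rw [qinner_rsmul_right, ← rsmul_rsmul]
  exact hb.const_smul (MulOpposite.op q)

/-- An orthonormal basis of the slice Hilbert space `H₊^{Jm}` is an
orthonormal basis of the quaternionic Hilbert space `H`. -/
theorem onBasis_slice_is_onBasis (J : Hsp → Hsp) (m : Hq) (hm : m ∈ QS)
    (hJlin : IsBoundedRightLinear J) (hJa : IsAntiSelfAdjoint J) (hJu : IsUnitaryOp J)
    (e : ℕ → Hsp) (he : IsONBasisOn (Hplus J m) e) :
    IsONBasisOn Set.univ e := by
  obtain ⟨hJadd, hJsm, -⟩ := hJlin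
  obtain ⟨n, hn, hnm⟩ := exists_ne_zero_mul_eq_neg_mul (star_eq_neg.1 hm.1)
  refine ⟨fun _ => trivial, he.2.1, fun x _ => ?_⟩
  obtain ⟨u, hu, v, hv, hx⟩ := exists_eq_add_rsmul_of_mem_Hplus (J := AddMonoidHom.mk' J hJadd)
    hJsm (hJa.apply_apply hJu) (mul_self_eq_neg_one_of_mem_QS hm) hn hnm x
  have hu' : HasExpansion e u := he.2.2 u hu
  have hv' : HasExpansion e v := he.2.2 v hv
  exact hx ▸ hu'.add (hv'.rsmul n⁻¹)
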